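/- arXiv:1905.10922 — 5 statements merged into one kernel-verified Lean document; each statement's English description precedes it below -/
import Mathlib

section
/- A set S ⊆ A is a complete extension of an argumentation framework ⟨A,R⟩ if and only if S ⊆ n(S) and S = n(n(S)), where n is the neutrality function. Hence complete extensions coincide exactly with Roth's subsolutions of the abstract game ⟨A,R⟩. -/
def attacked {A : Type*} (R : A → A → Prop) (S : Set A) : Set A :=
  {b | ∃ a ∈ S, R a b}

def neutrality {A : Type*} (R : A → A → Prop) (S : Set A) : Set A :=
  (attacked R S)ᶜ

def defence {A : Type*} (R : A → A → Prop) (S : Set A) : Set A :=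
  {a | ∀ b, R b a → b ∈ attacked R S}

def unattacked {A : Type*} (R : A → A → Prop) : Set A :=
  {a | ∀ b, ¬ R b a}

def conflictFree {A : Type*} (R : A → A → Prop) (S : Set A) : Prop :=
  S ⊆ neutrality R S

def complete {A : Type*} (R : A → A → Prop) (S : Set A) : Prop :=
  conflictFree R S ∧ S ⊆ defence R S ∧ defence R S ⊆ S

def subsolution {A : Type*} (R : A → A → Prop) (S : Set A) : Prop :=
  S ⊆ neutrality R S ∧ S = neutrality R (neutrality R S)

def stableExt {A : Type*} (R : A → A → Prop) (S : Set A) : Prop :=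
  S = neutrality R S

def preferred {A : Type*} (R : A → A → Prop) (S : Set A) : Prop :=
  complete R S ∧ ∀ T, complete R T → S ⊆ T → S = T

theorem defence_eq_neutrality_neutrality {A : Type*} (R : A → A → Prop) (S : Set A) :
    defence R S = neutrality R (neutrality R S) := by
  ext a
  simp only [defence, neutrality, attacked, Set.mem_ofPred_eq, Set.mem_compl_iff]
  exact ⟨fun h ⟨b, hb, hba⟩ => hb (h b hba),
    fun h b hba => by_contra fun hb => h ⟨b, hb, hba⟩⟩

/-- Complete extensions are exactly Roth's subsolutions. -/
theorem complete_iff_subsolution {A : Type*} (R : A → A → Prop) (S : Set A) :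
    complete R S ↔ subsolution R S := by
  rw [complete, subsolution, conflictFree, defence_eq_neutrality_neutrality,
    Set.Subset.antisymm_iff]
end

section
/- The supercore of an abstract game (the intersection of all its subsolutions) equals the grounded extension of the corresponding argumentation framework, i.e., the least fixed point of the defence function d, which is the ⊆-least complete extension. -/
/-!
The defence function `d = n ∘ n` is monotone, so by Knaster–Tarski it has a least fixed point `G`,
which lies below every pre-fixed point of `d`, in particular below every subsolution. Conversely `G`
is conflict-free, because `G ∩ n(G)` is again a pre-fixed point of `d`; hence `G` is itself a
subsolution and equals the intersection of all of them.
-/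

section Grounded

variable {A : Type*} (R : A → A → Prop)

theorem neutrality_neutrality (S : Set A) :
    neutrality R (neutrality R S) = defence R S := by
  ext a
  exact ⟨fun h b hba => not_not.1 fun hb => h ⟨b, hb, hba⟩, fun h ⟨b, hb, hba⟩ => hb (h b hba)⟩

theorem defence_mono : Monotone (defence R) := by
  rintro S T hST a ha b hba
  obtain ⟨c, hc, hcb⟩ := ha b hba
  exact ⟨c, hST hc, hcb⟩

theorem subsolution_iff_complete {S : Set A} : subsolution R S ↔ complete R S := by
  rw [subsolution, complete, neutrality_neutrality, conflictFree, Set.Subset.antisymm_iff]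

theorem defence_inter_neutrality_subset {S : Set A} (hS : S ⊆ defence R S) :
    defence R (S ∩ neutrality R S) ⊆ neutrality R S := by
  rintro a ha ⟨b, hbS, hba⟩
  obtain ⟨c, ⟨-, hcn⟩, hcb⟩ := ha b hba
  exact hcn (hS hbS c hcb)

def defenceHom : Set A →o Set A := ⟨defence R, defence_mono R⟩

noncomputable def grounded : Set A := OrderHom.lfp (defenceHom R)

theorem defence_grounded : defence R (grounded R) = grounded R :=
  OrderHom.map_lfp (defenceHom R)

theorem grounded_subset_of_defence_subset {T : Set A} (h : defence R T ⊆ T) :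
    grounded R ⊆ T :=
  OrderHom.lfp_le (defenceHom R) h

theorem conflictFree_grounded : conflictFree R (grounded R) := by
  have hself : grounded R ⊆ defence R (grounded R) := (defence_grounded R).ge
  suffices defence R (grounded R ∩ neutrality R (grounded R)) ⊆
      grounded R ∩ neutrality R (grounded R) from
    fun a ha => (grounded_subset_of_defence_subset R this ha).2
  refine Set.subset_inter ?_ (defence_inter_neutrality_subset R hself)
  calc defence R (grounded R ∩ neutrality R (grounded R))
      ⊆ defence R (grounded R) := defence_mono R Set.inter_subset_left
    _ = grounded R := defence_grounded R

theorem subsolution_grounded : subsolution R (grounded R) :=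
  ⟨conflictFree_grounded R, by rw [neutrality_neutrality, defence_grounded]⟩

theorem grounded_subset_of_subsolution {T : Set A} (h : subsolution R T) : grounded R ⊆ T :=
  grounded_subset_of_defence_subset R (by rw [← neutrality_neutrality, ← h.2])

theorem sInter_subsolution_eq_grounded : ⋂₀ {S | subsolution R S} = grounded R :=
  (Set.sInter_subset_of_mem (subsolution_grounded R)).antisymm
    (Set.subset_sInter fun _ => grounded_subset_of_subsolution R)

end Grounded

/-- The supercore (intersection of all subsolutions) is itself a subsolution, is the
least one (hence the ⊆-least complete extension, i.e. the grounded extension), and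
is the least fixed point of the defence function. -/
theorem supercore_eq_grounded {A : Type*} (R : A → A → Prop) :
    subsolution R (⋂₀ {S | subsolution R S}) ∧
    (∀ T, subsolution R T → ⋂₀ {S | subsolution R S} ⊆ T) ∧
    (∀ T, complete R T → ⋂₀ {S | subsolution R S} ⊆ T) ∧
    defence R (⋂₀ {S | subsolution R S}) = ⋂₀ {S | subsolution R S} ∧
    (∀ T, defence R T = T → ⋂₀ {S | subsolution R S} ⊆ T) := by
  rw [sInter_subsolution_eq_grounded]
  exact ⟨subsolution_grounded R,
    fun _ => grounded_subset_of_subsolution R,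
    fun _ hT => grounded_subset_of_subsolution R ((subsolution_iff_complete R).2 hT),
    defence_grounded R,
    fun _ hT => grounded_subset_of_defence_subset R hT.subset⟩
end

section
/- If an argumentation framework ⟨A,R⟩ is well-founded (there is no infinite sequence a⁰, a¹, a², ... with R(aⁱ⁺¹, aⁱ) for all i), then its grounded extension is the unique complete extension, the unique preferred extension, and the unique stable extension. -/
section Aux

open Relation

lemma wf_of_no_seq {A : Type*} {R : A → A → Prop}
    (h : ¬ ∃ f : ℕ → A, ∀ i : ℕ, R (f (i + 1)) (f i)) : WellFounded R := by
  by_contra hw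
  have hex : ∃ a, ¬ Acc R a := by
    by_contra hx
    push_neg at hx
    exact hw ⟨hx⟩
  have step : ∀ a : {a : A // ¬ Acc R a}, ∃ b : {a : A // ¬ Acc R a}, R b.1 a.1 := by
    rintro ⟨a, ha⟩
    by_contra hb
    push_neg at hb
    apply ha
    constructor
    intro y hy
    by_contra hAy
    exact hb ⟨y, hAy⟩ hy
  choose g hg using step
  obtain ⟨a0, ha0⟩ := hex
  refine h ⟨fun n => (g^[n] ⟨a0, ha0⟩).1, fun n => ?_⟩
  show R (g^[n+1] ⟨a0, ha0⟩).1 (g^[n] ⟨a0, ha0⟩).1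
  rw [Function.iterate_succ', Function.comp_apply]
  exact hg _

noncomputable def G0 {A : Type*} (R : A → A → Prop)
    (h : WellFounded (Relation.TransGen R)) : Set A :=
  fun a => h.fix
    (fun a rec => ∀ b, R b a → ∃ c, R c b ∧ ∃ hc : Relation.TransGen R c a, rec c hc) a

lemma G0_iff {A : Type*} {R : A → A → Prop} (h : WellFounded (Relation.TransGen R)) (a : A) :
    a ∈ G0 R h ↔ ∀ b, R b a → ∃ c, R c b ∧ c ∈ G0 R h := by
  have := h.fix_eq
    (fun a rec => ∀ b, R b a → ∃ c, R c b ∧ ∃ hc : Relation.TransGen R c a, rec c hc) a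
  constructor
  · intro ha b hb
    change G0 R h a at ha
    unfold G0 at ha ⊢
    rw [this] at ha
    obtain ⟨c, hcb, _, hc⟩ := ha b hb
    exact ⟨c, hcb, hc⟩
  · intro hall
    show G0 R h a
    unfold G0
    rw [this]
    intro b hb
    obtain ⟨c, hcb, hc⟩ := hall b hb
    exact ⟨c, hcb, (TransGen.single hb).head hcb, hc⟩

end Aux

/-- In a well-founded AF, the grounded extension is the unique complete, preferred
and stable extension. -/
theorem wellFounded_unique_semantics {A : Type*} (R : A → A → Prop)
    (hwf : ¬ ∃ f : ℕ → A, ∀ i : ℕ, R (f (i + 1)) (f i)) :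
    ∃ G : Set A, complete R G ∧ (∀ T, complete R T → G ⊆ T) ∧
      stableExt R G ∧
      (∀ T, complete R T → T = G) ∧
      (∀ T, preferred R T → T = G) ∧
      (∀ T, stableExt R T → T = G) := by
  have hw : WellFounded (Relation.TransGen R) := (wf_of_no_seq hwf).transGen
  set G := G0 R hw with hGdef
  have hGiff : ∀ a, a ∈ G ↔ ∀ b, R b a → ∃ c, R c b ∧ c ∈ G := fun a => G0_iff hw a
  -- G = defence R G
  have hGdefence : G = defence R G := by
    ext a
    rw [hGiff a]
    constructor
    · intro h b hb
      obtain ⟨c, hcb, hc⟩ := h b hb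
      exact ⟨c, hc, hcb⟩
    · intro h b hb
      obtain ⟨c, hc, hcb⟩ := h b hb
      exact ⟨c, hcb, hc⟩
  -- conflict free
  have hcf : conflictFree R G := by
    intro a ha
    induction a using hw.induction with
    | _ a ih =>
      rintro ⟨b, hb, hba⟩
      obtain ⟨c, hcb, hc⟩ := (hGiff a).1 ha b hba
      exact ih b (Relation.TransGen.single hba) hb ⟨c, hc, hcb⟩
  have hcomplete : complete R G := ⟨hcf, hGdefence.le, hGdefence.ge⟩
  -- least
  have hleast : ∀ T, complete R T → G ⊆ T := by
    intro T hT a ha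
    induction a using hw.induction with
    | _ a ih =>
      apply hT.2.2
      intro b hb
      obtain ⟨c, hcb, hc⟩ := (hGiff a).1 ha b hb
      have hcT : c ∈ T :=
        ih c ((Relation.TransGen.single hb).head hcb) hc
      exact ⟨c, hcT, hcb⟩
  -- stable
  have hstable : stableExt R G := by
    apply Set.Subset.antisymm hcf
    intro a ha
    induction a using hw.induction with
    | _ a ih =>
      rw [hGiff a]
      intro b hb
      by_contra hnb
      push_neg at hnb
      have hbG : b ∈ G := by
        apply ih b (Relation.TransGen.single hb)
        intro hbat
        obtain ⟨c, hc, hcb⟩ := hbat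
        exact hnb c hcb hc
      exact ha ⟨b, hbG, hb⟩
  -- uniqueness of complete
  have huniq : ∀ T, complete R T → T = G := by
    intro T hT
    apply Set.Subset.antisymm _ (hleast T hT)
    intro a ha
    by_contra hnG
    have : a ∈ neutrality R G → a ∈ G := by
      intro h
      rw [hstable]; exact h
    have hat : a ∈ attacked R G := by
      by_contra h
      exact hnG (this h)
    obtain ⟨b, hbG, hba⟩ := hat
    exact hT.1 ha ⟨b, hleast T hT hbG, hba⟩
  refine ⟨G, hcomplete, hleast, hstable, huniq, fun T hT => huniq T hT.1, fun T hT => ?_⟩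
  -- stable implies complete
  apply huniq
  refine ⟨hT.le, ?_, ?_⟩
  · intro a ha b hb
    by_contra hnb
    have hbS : b ∈ T := by
      rw [hT]
      intro hbat
      obtain ⟨c, hc, hcb⟩ := hbat
      exact hnb ⟨c, hc, hcb⟩
    exact (hT.le ha) ⟨b, hbS, hb⟩
  · intro a ha
    rw [hT]
    rintro ⟨b, hbT, hba⟩
    have := ha b hba
    exact (hT.le hbT) this
end

section
/- If the set U of unattacked arguments of an argumentation framework is a stable extension, then U equals the grounded extension and U is the unique complete extension. -/
/-!
Every complete extension contains the unattacked arguments, since they are defended vacuously.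
A stable extension is complete, and it is a maximal conflict-free set: anything outside it is
attacked by it. So if `U` is stable, it is complete and is contained in, hence equal to, every
complete extension.
-/

section

variable {A : Type*} {R : A → A → Prop}

theorem attacked_mono {S T : Set A} (hST : S ⊆ T) : attacked R S ⊆ attacked R T :=
  fun _ ⟨a, ha, hab⟩ => ⟨a, hST ha, hab⟩

theorem unattacked_subset_defence (S : Set A) : unattacked R ⊆ defence R S :=
  fun _ ha b hb => absurd hb (ha b)

theorem complete.unattacked_subset {T : Set A} (hT : complete R T) : unattacked R ⊆ T :=
  (unattacked_subset_defence T).trans hT.2.2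

namespace stableExt

variable {S : Set A}

theorem conflictFree (h : stableExt R S) : conflictFree R S :=
  h.le

theorem mem_attacked_of_notMem (h : stableExt R S) {a : A} (ha : a ∉ S) : a ∈ attacked R S :=
  not_not.mp fun hn => ha (h ▸ hn)

theorem notMem_attacked_of_mem (h : stableExt R S) {a : A} (ha : a ∈ S) : a ∉ attacked R S :=
  h.conflictFree ha

theorem complete (h : stableExt R S) : complete R S := by
  refine ⟨h.conflictFree, ?_, ?_⟩
  · intro a ha b hba
    have hb : b ∉ S := fun hb => h.notMem_attacked_of_mem ha ⟨b, hb, hba⟩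
    exact h.mem_attacked_of_notMem hb
  · intro a ha
    by_contra haS
    obtain ⟨s, hs, hsa⟩ := h.mem_attacked_of_notMem haS
    exact h.notMem_attacked_of_mem hs (ha s hsa)

theorem eq_of_subset_of_conflictFree (h : stableExt R S) {T : Set A} (hST : S ⊆ T)
    (hT : _root_.conflictFree R T) : T = S := by
  refine Set.Subset.antisymm ?_ hST
  intro t ht
  by_contra htS
  exact hT ht (attacked_mono hST (h.mem_attacked_of_notMem htS))

end stableExt

end

/-- If the set of unattacked arguments is a stable extension, then it is the grounded
extension and the unique complete extension. -/
theorem unattacked_stable_is_grounded {A : Type*} (R : A → A → Prop)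
    (h : stableExt R (unattacked R)) :
    complete R (unattacked R) ∧ (∀ T, complete R T → unattacked R ⊆ T) ∧
    (∀ T, complete R T → T = unattacked R) :=
  ⟨h.complete, fun _ hT => hT.unattacked_subset,
    fun _ hT => h.eq_of_subset_of_conflictFree hT.unattacked_subset hT.1⟩
end

section
/- An imputation x belongs to the core of a cooperative game (i.e., Σ_{k∈C} xₖ ≥ v(C) for all coalitions C) if and only if x is not dominated by any imputation. -/
/-- The set of imputations of the cooperative game `⟨N, v⟩`. -/
def Imputation {N : Type*} [Fintype N] [DecidableEq N] (v : Finset N → ℝ)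
    (x : N → ℝ) : Prop :=
  (∑ k, x k) = v Finset.univ ∧ ∀ k : N, v {k} ≤ x k

/-- Domination via the coalition `C`: `x →_C y`. -/
def DomVia {N : Type*} [Fintype N] [DecidableEq N] (v : Finset N → ℝ)
    (C : Finset N) (x y : N → ℝ) : Prop :=
  (∀ k ∈ C, y k < x k) ∧ (∑ k ∈ C, x k) ≤ v C

/-- `x` dominates `y`: domination via some nonempty coalition. -/
def Dominates {N : Type*} [Fintype N] [DecidableEq N] (v : Finset N → ℝ)
    (x y : N → ℝ) : Prop :=
  ∃ C : Finset N, C.Nonempty ∧ DomVia v C x y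


/-! An imputation in the core cannot be dominated: a dominating coalition `C` would receive more
than `∑ k ∈ C, x k ≥ v C`, which it cannot afford. Conversely, if some coalition `C` gets less than
`v C`, raise the payoff of each member of `C` by an equal share of the deficit until `C` gets
exactly `v C`, and split `v N - v C` among the outsiders as their individual values plus equal
shares. Superadditivity gives `v N - v C ≥ v Cᶜ ≥ ∑ k ∈ Cᶜ, v {k}`, so the shares are nonnegative
and the result is an imputation dominating `x` via `C`. -/

theorem Finset.sum_add_div_card_eq {ι K : Type*} [Field K] [CharZero K] {s : Finset ι}
    (hs : s.Nonempty) (f : ι → K) (t : K) :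
    ∑ k ∈ s, (f k + (t - ∑ j ∈ s, f j) / s.card) = t := by
  have hcard : (s.card : K) ≠ 0 := Nat.cast_ne_zero.mpr hs.card_pos.ne'
  rw [Finset.sum_add_distrib, Finset.sum_const, nsmul_eq_mul, mul_div_cancel₀ _ hcard]
  ring

section CooperativeGame

variable {N : Type*} [DecidableEq N] {v : Finset N → ℝ}

theorem sum_singleton_le_of_superadditive (h0 : v ∅ = 0)
    (hsuper : ∀ C C' : Finset N, Disjoint C C' → v C + v C' ≤ v (C ∪ C')) (S : Finset N) :
    ∑ k ∈ S, v {k} ≤ v S := by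
  induction S using Finset.induction with
  | empty => simp [h0]
  | @insert a S ha ih =>
    have hsplit := hsuper {a} S (Finset.disjoint_singleton_left.mpr ha)
    rw [← Finset.insert_eq] at hsplit
    rw [Finset.sum_insert ha]
    linarith

variable [Fintype N]

theorem not_dominates_of_forall_le_sum {x : N → ℝ} (hcore : ∀ C : Finset N, v C ≤ ∑ k ∈ C, x k)
    (y : N → ℝ) : ¬ Dominates v y x := by
  rintro ⟨C, hC, hgain, hafford⟩
  have := Finset.sum_lt_sum_of_nonempty hC hgain
  linarith [hcore C]

theorem exists_imputation_domVia_of_sum_lt (h0 : v ∅ = 0)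
    (hsuper : ∀ C C' : Finset N, Disjoint C C' → v C + v C' ≤ v (C ∪ C'))
    {x : N → ℝ} (hx : Imputation v x) {C : Finset N} (hC : C.Nonempty) (hCc : Cᶜ.Nonempty)
    (hdeficit : ∑ k ∈ C, x k < v C) :
    ∃ y : N → ℝ, Imputation v y ∧ DomVia v C y x := by
  set ε := (v C - ∑ k ∈ C, x k) / C.card
  set δ := (v Finset.univ - v C - ∑ k ∈ Cᶜ, v {k}) / Cᶜ.card
  have hε : 0 < ε := div_pos (by linarith) (by exact_mod_cast hC.card_pos)
  have hδ : 0 ≤ δ := by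
    have hrest := hsuper C Cᶜ disjoint_compl_right
    rw [Finset.union_compl] at hrest
    have := sum_singleton_le_of_superadditive h0 hsuper Cᶜ
    exact div_nonneg (by linarith) (Nat.cast_nonneg _)
  set y : N → ℝ := fun k => if k ∈ C then x k + ε else v {k} + δ
  have hyC : ∑ k ∈ C, y k = v C := by
    rw [Finset.sum_congr rfl fun k hk => if_pos hk]
    exact Finset.sum_add_div_card_eq hC x (v C)
  have hyCc : ∑ k ∈ Cᶜ, y k = v Finset.univ - v C := by
    rw [Finset.sum_congr rfl fun k hk => if_neg (Finset.mem_compl.mp hk)]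
    rw [Finset.sum_add_div_card_eq hCc (fun k => v {k}) (v Finset.univ - v C)]
  refine ⟨y, ⟨?_, fun k => ?_⟩, fun k hk => ?_, hyC.le⟩
  · rw [← Finset.sum_add_sum_compl C y, hyC, hyCc]
    ring
  · by_cases hk : k ∈ C
    · simp only [y, if_pos hk]
      linarith [hx.2 k]
    · simp only [y, if_neg hk]
      linarith
  · simp only [y, if_pos hk]
    linarith

end CooperativeGame

theorem core_iff_undominated_general {N : Type*} [Fintype N] [DecidableEq N]
    (v : Finset N → ℝ) (h0 : v ∅ = 0)
    (hsuper : ∀ C C' : Finset N, Disjoint C C' → v C + v C' ≤ v (C ∪ C'))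
    (x : N → ℝ) (hx : Imputation v x) :
    (∀ C : Finset N, v C ≤ ∑ k ∈ C, x k) ↔
      ¬ ∃ y : N → ℝ, Imputation v y ∧ Dominates v y x := by
  refine ⟨fun hcore ⟨y, _, hdom⟩ => not_dominates_of_forall_le_sum hcore y hdom, fun hund C => ?_⟩
  by_contra! hdeficit
  have hC : C.Nonempty := Finset.nonempty_iff_ne_empty.mpr <| by
    rintro rfl
    simp [h0] at hdeficit
  have hCc : Cᶜ.Nonempty := Finset.nonempty_iff_ne_empty.mpr <| by
    rw [Ne, Finset.compl_eq_empty_iff]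
    rintro rfl
    exact hdeficit.ne hx.1
  obtain ⟨y, hy, hdom⟩ := exists_imputation_domVia_of_sum_lt h0 hsuper hx hC hCc hdeficit
  exact hund ⟨y, hy, C, hC, hdom⟩

/-- An imputation is in the core iff it is undominated. -/
theorem core_iff_undominated {N : Type*} [Fintype N] [DecidableEq N]
    (v : Finset N → ℝ) (h0 : v ∅ = 0)
    (hnonneg : ∀ C : Finset N, 0 ≤ v C)
    (hsuper : ∀ C C' : Finset N, Disjoint C C' → v C + v C' ≤ v (C ∪ C'))
    (x : N → ℝ) (hx : Imputation v x) :
    (∀ C : Finset N, v C ≤ ∑ k ∈ C, x k) ↔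
      ¬ ∃ y : N → ℝ, Imputation v y ∧ Dominates v y x :=
  core_iff_undominated_general v h0 hsuper x hx
end
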